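/- arXiv:2008.04354 — 7 statements merged into one kernel-verified Lean document; each statement's English description precedes it below -/
import Mathlib

section
/- Let X be a topological space, Y a metric space, and (f_n) a sequence of functions f_n : X → Y converging pointwise to f. Then the set UC of points at which (f_n) is uniformly Cauchy is a G_δ subset of X. -/
open Filter Topology

/-- For a pointwise convergent sequence of functions into a metric space, the set of
points at which the sequence is uniformly Cauchy is a `Gδ` set. -/
theorem stmt_2 {X Y : Type*} [TopologicalSpace X] [MetricSpace Y]
    (F : ℕ → X → Y) (f : X → Y)
    (hf : ∀ x, Tendsto (fun n => F n x) atTop (𝓝 (f x))) :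
    IsGδ {x₀ : X | ∀ ε > (0 : ℝ), ∃ U ∈ 𝓝 x₀, ∃ n₀ : ℕ, ∀ n ≥ n₀, ∀ m ≥ n₀, ∀ x ∈ U,
        dist (F n x) (F m x) < ε} := by
  have key : {x₀ : X | ∀ ε > (0 : ℝ), ∃ U ∈ 𝓝 x₀, ∃ n₀ : ℕ, ∀ n ≥ n₀, ∀ m ≥ n₀, ∀ x ∈ U,
        dist (F n x) (F m x) < ε} =
      ⋂ k : ℕ, {x₀ : X | ∃ U ∈ 𝓝 x₀, ∃ n₀ : ℕ, ∀ n ≥ n₀, ∀ m ≥ n₀, ∀ x ∈ U,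
        dist (F n x) (F m x) < 1 / (k + 1)} := by
    ext x₀
    simp only [Set.mem_setOf_eq, Set.mem_iInter]
    constructor
    · intro h k
      exact h (1 / (k + 1)) (by positivity)
    · intro h ε hε
      obtain ⟨k, hk⟩ := exists_nat_one_div_lt hε
      obtain ⟨U, hU, n₀, hn₀⟩ := h k
      exact ⟨U, hU, n₀, fun n hn m hm x hx => (hn₀ n hn m hm x hx).trans hk⟩
  rw [key]
  refine IsGδ.iInter fun k => IsOpen.isGδ ?_
  rw [isOpen_iff_mem_nhds]
  rintro x₀ ⟨U, hU, n₀, hn₀⟩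
  filter_upwards [interior_mem_nhds.mpr hU] with y hy
  exact ⟨interior U, isOpen_interior.mem_nhds hy, n₀,
    fun n hn m hm x hx => hn₀ n hn m hm x (interior_subset hx)⟩
end

section
/- Let X be a topological space and (G_n)_{n≥0} a decreasing sequence of open sets with G_0 = X. Suppose for each n ≥ 1, α_n : X → [−1,1] is a continuous function with α_n < 0 on G_n, α_n = 0 on ∂G_n, and α_n > 0 on X \ closure(G_n). Define β_n(x) = max_{1 ≤ i ≤ n} α_i(x). Then for every n ≥ 1, β_n^{-1}(0) = ∂G_n. -/
/-- `β_n^{-1}(0) = ∂ G_n` for every `n ≥ 1`. -/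
theorem stmt_5 {X : Type*} [TopologicalSpace X]
    (G : ℕ → Set X) (hGopen : ∀ n, IsOpen (G n))
    (hGdec : ∀ n, G (n + 1) ⊆ G n) (hG0 : G 0 = Set.univ)
    (α : ℕ → X → ℝ)
    (hαc : ∀ n, 1 ≤ n → Continuous (α n))
    (hαr : ∀ n, 1 ≤ n → ∀ x, α n x ∈ Set.Icc (-1 : ℝ) 1)
    (hαneg : ∀ n, 1 ≤ n → ∀ x ∈ G n, α n x < 0)
    (hαzero : ∀ n, 1 ≤ n → ∀ x ∈ frontier (G n), α n x = 0)
    (hαpos : ∀ n, 1 ≤ n → ∀ x ∉ closure (G n), 0 < α n x)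
    (β : ℕ → X → ℝ)
    (hβ : ∀ n (hn : 1 ≤ n) (x : X),
      β n x = (Finset.Icc 1 n).sup' (Finset.nonempty_Icc.mpr hn) fun i => α i x)
    (n : ℕ) (hn : 1 ≤ n) :
    β n ⁻¹' {0} = frontier (G n) := by
  have hanti : Antitone G := antitone_nat_of_succ_le hGdec
  -- α i ≤ 0 on closure (G i)
  have hcl : ∀ i, 1 ≤ i → ∀ x ∈ closure (G i), α i x ≤ 0 := by
    intro i hi x hx
    have h1 : G i ⊆ α i ⁻¹' Set.Iic 0 := fun y hy => le_of_lt (hαneg i hi y hy)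
    have h2 : closure (G i) ⊆ α i ⁻¹' Set.Iic 0 :=
      closure_minimal h1 (isClosed_Iic.preimage (hαc i hi))
    exact h2 hx
  have hfr : frontier (G n) = closure (G n) \ G n := (hGopen n).frontier_eq
  ext x
  simp only [Set.mem_preimage, Set.mem_singleton_iff, hβ n hn x]
  constructor
  · intro h
    rw [hfr]
    have hmem : n ∈ Finset.Icc 1 n := Finset.mem_Icc.mpr ⟨hn, le_refl n⟩
    constructor
    · by_contra hnc
      have := hαpos n hn x hnc
      have hle : α n x ≤ (Finset.Icc 1 n).sup'
          (Finset.nonempty_Icc.mpr hn) (fun i => α i x) :=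
        Finset.le_sup' (fun i => α i x) hmem
      rw [h] at hle
      linarith
    · intro hxG
      have hall : ∀ i ∈ Finset.Icc 1 n, α i x < 0 := by
        intro i hiI
        obtain ⟨h1i, hin⟩ := Finset.mem_Icc.mp hiI
        exact hαneg i h1i x (hanti hin hxG)
      have : (Finset.Icc 1 n).sup' (Finset.nonempty_Icc.mpr hn) (fun i => α i x) < 0 :=
        (Finset.sup'_lt_iff _).mpr hall
      rw [h] at this; linarith
  · intro hx
    apply le_antisymm
    · apply (Finset.sup'_le_iff _ _).mpr
      intro i hiI
      obtain ⟨h1i, hin⟩ := Finset.mem_Icc.mp hiI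
      have hxc : x ∈ closure (G i) := by
        have : closure (G n) ⊆ closure (G i) := closure_mono (hanti hin)
        exact this (frontier_subset_closure hx)
      exact hcl i h1i x hxc
    · have : α n x = 0 := hαzero n hn x hx
      calc (0 : ℝ) = α n x := this.symm
        _ ≤ _ := Finset.le_sup' (fun i => α i x) (Finset.mem_Icc.mpr ⟨hn, le_refl n⟩)
end

section
/- Let X be a topological space, (G_n) a decreasing sequence of open sets with G_0 = X, and for n ≥ 1 let α_n : X → [−1,1] be continuous with α_n < 0 on G_n, α_n = 0 on ∂G_n, α_n > 0 off closure(G_n). Define β_n = max_{i ≤ n} α_i, γ_n(x) = min_{i ≤ n} |β_i(x)|. Then γ_n^{-1}(0) = ⋃_{i=1}^{n} ∂G_i. -/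
/-- `γ_n^{-1}(0) = ⋃_{i=1}^{n} ∂ G_i` for every `n ≥ 1`. -/
theorem stmt_7 {X : Type*} [TopologicalSpace X]
    (G : ℕ → Set X) (hGopen : ∀ n, IsOpen (G n))
    (hGdec : ∀ n, G (n + 1) ⊆ G n) (hG0 : G 0 = Set.univ)
    (α : ℕ → X → ℝ)
    (hαc : ∀ n, 1 ≤ n → Continuous (α n))
    (hαr : ∀ n, 1 ≤ n → ∀ x, α n x ∈ Set.Icc (-1 : ℝ) 1)
    (hαneg : ∀ n, 1 ≤ n → ∀ x ∈ G n, α n x < 0)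
    (hαzero : ∀ n, 1 ≤ n → ∀ x ∈ frontier (G n), α n x = 0)
    (hαpos : ∀ n, 1 ≤ n → ∀ x ∉ closure (G n), 0 < α n x)
    (β : ℕ → X → ℝ)
    (hβ : ∀ n (hn : 1 ≤ n) (x : X),
      β n x = (Finset.Icc 1 n).sup' (Finset.nonempty_Icc.mpr hn) fun i => α i x)
    (γ : ℕ → X → ℝ)
    (hγ : ∀ n (hn : 1 ≤ n) (x : X),
      γ n x = (Finset.Icc 1 n).inf' (Finset.nonempty_Icc.mpr hn) fun i => |β i x|)
    (n : ℕ) (hn : 1 ≤ n) :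
    γ n ⁻¹' {0} = ⋃ i ∈ Finset.Icc 1 n, frontier (G i) := by
  have hanti : Antitone G := antitone_nat_of_succ_le hGdec
  -- key lemma: β m x = 0 ↔ x ∈ frontier (G m)
  have key : ∀ m, 1 ≤ m → ∀ x, (β m x = 0 ↔ x ∈ frontier (G m)) := by
    intro m hm x
    rw [hβ m hm x]
    constructor
    · intro h0
      rw [(hGopen m).frontier_eq]
      by_cases hxG : x ∈ G m
      · exfalso
        have : (Finset.Icc 1 m).sup' (Finset.nonempty_Icc.mpr hm) (fun i => α i x) < 0 := by
          rw [Finset.sup'_lt_iff]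
          intro i hi
          rw [Finset.mem_Icc] at hi
          exact hαneg i hi.1 x (hanti hi.2 hxG)
        linarith
      · by_cases hxc : x ∈ closure (G m)
        · exact ⟨hxc, hxG⟩
        · exfalso
          have h1 : α m x ≤ (Finset.Icc 1 m).sup' (Finset.nonempty_Icc.mpr hm)
              (fun i => α i x) :=
            Finset.le_sup' (fun i => α i x) (Finset.mem_Icc.mpr ⟨hm, le_refl m⟩)
          have h2 := hαpos m hm x hxc
          linarith
    · intro hx
      apply le_antisymm
      · rw [Finset.sup'_le_iff]
        intro i hi
        rw [Finset.mem_Icc] at hi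
        have hxc : x ∈ closure (G i) :=
          closure_mono (hanti hi.2) (frontier_subset_closure hx)
        rcases (closure_eq_self_union_frontier (G i) ▸ hxc) with h | h
        · exact le_of_lt (hαneg i hi.1 x h)
        · exact le_of_eq (hαzero i hi.1 x h)
      · have h1 : α m x ≤ (Finset.Icc 1 m).sup' (Finset.nonempty_Icc.mpr hm)
            (fun i => α i x) :=
          Finset.le_sup' (fun i => α i x) (Finset.mem_Icc.mpr ⟨hm, le_refl m⟩)
        rw [hαzero m hm x hx] at h1
        exact h1
  ext x
  simp only [Set.mem_preimage, Set.mem_singleton_iff, Set.mem_iUnion, exists_prop]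
  rw [hγ n hn x]
  constructor
  · intro h0
    obtain ⟨i, hi, hieq⟩ := Finset.exists_mem_eq_inf' (Finset.nonempty_Icc.mpr hn)
      (fun i => |β i x|)
    refine ⟨i, hi, ?_⟩
    rw [← key i (Finset.mem_Icc.mp hi).1 x]
    have : |β i x| = 0 := by rw [← hieq, h0]
    exact abs_eq_zero.mp this
  · rintro ⟨i, hi, hx⟩
    apply le_antisymm
    · have h1 : (Finset.Icc 1 n).inf' (Finset.nonempty_Icc.mpr hn)
          (fun i => |β i x|) ≤ |β i x| := Finset.inf'_le _ hi
      rw [(key i (Finset.mem_Icc.mp hi).1 x).mpr hx, abs_zero] at h1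
      exact h1
    · rw [Finset.le_inf'_iff]
      intro j _
      exact abs_nonneg _
end

section
/- Let X be a topological space in which the boundary of every closed set is a zero set (functionally closed). Then every closed set F ⊆ X is a zero set: if g : X → [0,1] is continuous with ∂F = g^{-1}(0), then the function f defined by f = g on X \ interior(F) and f = 0 on interior(F) is continuous and F = f^{-1}(0). -/
/-- If `F` is closed, `g : X → [0,1]` is continuous with `∂F = g⁻¹(0)`, and `f` equals
`g` off `interior F` and `0` on `interior F`, then `f` is continuous and `F = f⁻¹(0)`. -/
theorem stmt_14 {X : Type*} [TopologicalSpace X]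
    (F : Set X) (hF : IsClosed F)
    (g : X → ℝ) (hg : Continuous g) (hgr : ∀ x, g x ∈ Set.Icc (0 : ℝ) 1)
    (hg0 : F \ interior F = g ⁻¹' {0})
    (f : X → ℝ) (hf1 : ∀ x ∈ interior F, f x = 0)
    (hf2 : ∀ x ∉ interior F, f x = g x) :
    Continuous f ∧ F = f ⁻¹' {0} := by
  have hfle : ∀ y, 0 ≤ f y ∧ f y ≤ g y := by
    intro y
    by_cases hy : y ∈ interior F
    · rw [hf1 y hy]; exact ⟨le_refl 0, (hgr y).1⟩
    · rw [hf2 y hy]; exact ⟨(hgr y).1, le_refl _⟩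
  constructor
  · rw [continuous_iff_continuousAt]
    intro x
    by_cases hx : x ∈ interior F
    · have : f =ᶠ[nhds x] fun _ => 0 := by
        filter_upwards [isOpen_interior.mem_nhds hx] with y hy using hf1 y hy
      exact (continuousAt_const).congr this.symm
    by_cases hxF : x ∈ F
    · -- boundary point: g x = 0, squeeze
      have hgx : g x = 0 := by
        have : x ∈ g ⁻¹' {0} := hg0 ▸ ⟨hxF, hx⟩
        simpa using this
      have hfx : f x = 0 := by rw [hf2 x hx, hgx]
      rw [ContinuousAt, hfx]
      exact squeeze_zero (fun y => (hfle y).1) (fun y => (hfle y).2)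
        (hgx ▸ hg.continuousAt)
    · have : f =ᶠ[nhds x] g := by
        filter_upwards [hF.isOpen_compl.mem_nhds hxF] with y hy
        exact hf2 y (fun h => hy (interior_subset h))
      exact (hg.continuousAt).congr this.symm
  · ext x
    simp only [Set.mem_preimage, Set.mem_singleton_iff]
    constructor
    · intro hxF
      by_cases hx : x ∈ interior F
      · exact hf1 x hx
      · have : x ∈ g ⁻¹' {0} := hg0 ▸ ⟨hxF, hx⟩
        rw [hf2 x hx]; simpa using this
    · intro hfx
      by_cases hx : x ∈ interior F
      · exact interior_subset hx
      · have : x ∈ g ⁻¹' {0} := by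
          rw [hf2 x hx] at hfx; simpa using hfx
        rw [← hg0] at this; exact this.1
end

section
/- Let X be a perfectly normal ω-resolvable topological space and A ⊆ X a G_δ set containing all isolated points of X. Then there exists a sequence (f_n) of functions f_n : X → ℝ converging pointwise on X such that A is exactly the set of points at which (f_n) is uniformly Cauchy. -/
open Filter Topology

/-- Main construction: if `X` is perfectly normal and ω-resolvable and `A` is a `Gδ`
set containing all isolated points, then `A` is the set of points of uniform Cauchyness
of some pointwise convergent sequence of real-valued functions. -/
theorem stmt_15 {X : Type*} [TopologicalSpace X] [NormalSpace X]
    (hpn : ∀ F : Set X, IsClosed F → ∃ φ : X → ℝ, Continuous φ ∧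
      (∀ x, φ x ∈ Set.Icc (0 : ℝ) 1) ∧ F = φ ⁻¹' {0})
    (hres : ∃ P : ℕ → Set X, (∀ n m, n ≠ m → Disjoint (P n) (P m)) ∧
      (⋃ n, P n) = Set.univ ∧ ∀ n, Dense (P n))
    (A : Set X) (hA : IsGδ A)
    (hiso : ∀ x : X, IsOpen ({x} : Set X) → x ∈ A) :
    ∃ f : ℕ → X → ℝ, (∀ x, ∃ y : ℝ, Tendsto (fun n => f n x) atTop (𝓝 y)) ∧
      A = {x₀ : X | ∀ ε > (0 : ℝ), ∃ U ∈ 𝓝 x₀, ∃ n₀ : ℕ, ∀ n ≥ n₀, ∀ m ≥ n₀, ∀ x ∈ U,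
        |f n x - f m x| < ε} := by
  obtain ⟨U, hUopen, hAU⟩ := hA.eq_iInter_nat
  choose φ hφc hφ01 hφ0 using fun k => hpn (U k)ᶜ (hUopen k).isClosed_compl
  obtain ⟨P, hPdis, hPuniv, hPdense⟩ := hres
  classical
  have hiff : ∀ x k, φ k x = 0 ↔ x ∉ U k := by
    intro x k
    rw [← Set.mem_compl_iff, hφ0 k, Set.mem_preimage, Set.mem_singleton_iff]
  have hmemA : ∀ x, x ∈ A ↔ ∀ k, 0 < φ k x := by
    intro x
    rw [hAU, Set.mem_iInter]
    constructor
    · intro h k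
      rcases lt_or_eq_of_le (hφ01 k x).1 with h' | h'
      · exact h'
      · exact absurd ((hiff x k).1 h'.symm) (not_not_intro (h k))
    · intro h k
      by_contra hk
      exact (ne_of_gt (h k)) ((hiff x k).2 hk)
  set f : ℕ → X → ℝ := fun n x =>
    if x ∈ P n then (1/2 : ℝ) ^ (Nat.unpair n).1 *
      max 0 (1 - (Nat.unpair n).2 * φ (Nat.unpair n).1 x) else 0 with hfdef
  have fnonneg : ∀ n x, 0 ≤ f n x := by
    intro n x
    simp only [hfdef]
    split
    · exact mul_nonneg (by positivity) (le_max_left _ _)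
    · exact le_rfl
  have fle : ∀ n x, f n x ≤ (1/2 : ℝ) ^ (Nat.unpair n).1 := by
    intro n x
    simp only [hfdef]
    split
    · have h1 : max 0 (1 - (Nat.unpair n).2 * φ (Nat.unpair n).1 x) ≤ 1 := by
        apply max_le (by norm_num)
        have := (hφ01 (Nat.unpair n).1 x).1
        have : (0:ℝ) ≤ (Nat.unpair n).2 * φ (Nat.unpair n).1 x := by positivity
        linarith
      calc (1/2 : ℝ) ^ (Nat.unpair n).1 * max 0 (1 - (Nat.unpair n).2 * φ (Nat.unpair n).1 x)
          ≤ (1/2 : ℝ) ^ (Nat.unpair n).1 * 1 := by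
            apply mul_le_mul_of_nonneg_left h1 (by positivity)
        _ = (1/2 : ℝ) ^ (Nat.unpair n).1 := mul_one _
    · positivity
  refine ⟨f, ?_, ?_⟩
  · -- pointwise convergence to 0
    intro x
    obtain ⟨j, hj⟩ : ∃ j, x ∈ P j := by
      have : x ∈ ⋃ n, P n := hPuniv ▸ Set.mem_univ x
      exact Set.mem_iUnion.1 this
    refine ⟨0, Tendsto.congr' ?_ tendsto_const_nhds⟩
    filter_upwards [eventually_ge_atTop (j + 1)] with n hn
    have hne : n ≠ j := by omega
    have hx : x ∉ P n := fun hx => (hPdis n j hne).le_bot ⟨hx, hj⟩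
    simp [hfdef, hx]
  · -- set equality
    apply Set.Subset.antisymm
    · -- A ⊆ uniform Cauchy points
      intro x₀ hx₀
      have hpos : ∀ k, 0 < φ k x₀ := (hmemA x₀).1 hx₀
      intro ε hε
      obtain ⟨K, hK⟩ : ∃ K : ℕ, (1/2 : ℝ) ^ K < ε :=
        exists_pow_lt_of_lt_one hε (by norm_num)
      -- choose M controlling small levels
      have hMk : ∀ k, ∃ m : ℕ, (2:ℝ) ≤ m * φ k x₀ := by
        intro k
        obtain ⟨m, hm⟩ := exists_nat_ge (2 / φ k x₀)
        exact ⟨m, (div_le_iff₀ (hpos k)).1 hm⟩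
      choose Mk hMk using hMk
      set M := (Finset.range (K+1)).sup Mk with hMdef
      have hM : ∀ k ≤ K, (2:ℝ) ≤ M * φ k x₀ := by
        intro k hk
        refine le_trans (hMk k) ?_
        apply mul_le_mul_of_nonneg_right _ (hpos k).le
        exact_mod_cast Finset.le_sup (Finset.mem_range.2 (by omega))
      set V := ⋂ k ∈ Finset.range (K+1), {x | φ k x₀ / 2 < φ k x} with hVdef
      have hVopen : IsOpen V :=
        isOpen_biInter_finset fun k _ => isOpen_lt continuous_const (hφc k)
      have hx₀V : x₀ ∈ V := by
        simp only [hVdef, Set.mem_iInter, Set.mem_setOf_eq]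
        intro k _
        linarith [hpos k]
      have key : ∀ n ≥ (K + M + 1)^2, ∀ x ∈ V, f n x < ε := by
        intro n hn x hx
        set k := (Nat.unpair n).1 with hk
        set i := (Nat.unpair n).2 with hi
        by_cases hkK : k ≤ K
        · have hiM : M ≤ i := by
            by_contra hiM
            push_neg at hiM
            have h1 : n < (max k i + 1)^2 := by
              have := Nat.pair_lt_max_add_one_sq k i
              rwa [hk, hi, Nat.pair_unpair] at this
            have h2 : max k i + 1 ≤ K + M + 1 := by
              have : max k i ≤ K + M := max_le (by omega) (by omega)
              omega
            have : n < (K + M + 1)^2 := lt_of_lt_of_le h1 (Nat.pow_le_pow_left h2 2)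
            omega
          have hφx : φ k x₀ / 2 < φ k x := by
            have := Set.mem_iInter.1 hx k
            simpa using Set.mem_iInter.1 (this) (Finset.mem_range.2 (by omega))
          have hiφ : (1:ℝ) ≤ i * φ k x := by
            have h1 : (M:ℝ) ≤ i := by exact_mod_cast hiM
            have h2 : (2:ℝ) ≤ M * φ k x₀ := hM k hkK
            have h3 : (M:ℝ) * (φ k x₀ / 2) ≤ (i:ℝ) * φ k x := by
              apply mul_le_mul h1 hφx.le (by linarith [hpos k]) (by positivity)
            nlinarith
          have : f n x ≤ 0 := by
            simp only [hfdef, ← hk, ← hi]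
            split
            · have : max 0 (1 - (i:ℝ) * φ k x) = 0 := max_eq_left (by linarith)
              rw [this, mul_zero]
            · exact le_rfl
          linarith
        · push_neg at hkK
          have : f n x ≤ (1/2:ℝ)^k := fle n x
          have h2 : (1/2:ℝ)^k ≤ (1/2:ℝ)^K :=
            pow_le_pow_of_le_one (by norm_num) (by norm_num) (by omega)
          linarith
      refine ⟨V, hVopen.mem_nhds hx₀V, (K + M + 1)^2, ?_⟩
      intro n hn m hm x hx
      have h1 := key n hn x hx
      have h2 := key m hm x hx
      have h3 := fnonneg n x
      have h4 := fnonneg m x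
      rw [abs_sub_lt_iff]
      constructor <;> linarith
    · -- uniform Cauchy points ⊆ A
      intro x₀ hx₀
      by_contra hA'
      obtain ⟨k₀, hk₀⟩ : ∃ k₀, φ k₀ x₀ = 0 := by
        rw [hmemA x₀] at hA'
        push_neg at hA'
        obtain ⟨k₀, hk₀⟩ := hA'
        exact ⟨k₀, le_antisymm hk₀ (hφ01 k₀ x₀).1⟩
      have hε : (0:ℝ) < (1/2)^k₀ / 2 := by positivity
      obtain ⟨W, hW, n₀, hUC⟩ := hx₀ ((1/2:ℝ)^k₀ / 2) hε
      obtain ⟨O, hOW, hOopen, hx₀O⟩ := mem_nhds_iff.1 hW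
      set i := n₀ + 1 with hidef
      set n := Nat.pair k₀ i with hndef
      have hnn₀ : n₀ ≤ n := le_trans (by omega) (Nat.right_le_pair k₀ i)
      set G := O ∩ {x | φ k₀ x < 1/(2*i)} with hGdef
      have hGopen : IsOpen G := hOopen.inter (isOpen_lt (hφc k₀) continuous_const)
      have hx₀G : x₀ ∈ G := ⟨hx₀O, by simp only [Set.mem_setOf_eq, hk₀]; positivity⟩
      obtain ⟨x, hxP, hxG⟩ := (hPdense n).exists_mem_open hGopen ⟨x₀, hx₀G⟩
      have hxO : x ∈ O := hxG.1
      have hxφ : φ k₀ x < 1/(2*i) := hxG.2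
      have hfm : f (n+1) x = 0 := by
        have hne : n + 1 ≠ n := by omega
        have : x ∉ P (n+1) := fun hx => (hPdis (n+1) n hne).le_bot ⟨hx, hxP⟩
        simp [hfdef, this]
      have hfn : (1/2:ℝ)^k₀ / 2 < f n x := by
        have hiφ : (i:ℝ) * φ k₀ x < 1/2 := by
          have hi0 : (0:ℝ) < i := by positivity
          have := mul_lt_mul_of_pos_left hxφ hi0
          have h2 : (i:ℝ) * (1/(2*i)) = 1/2 := by field_simp
          linarith [this, h2 ▸ this]
        have h1 : (1:ℝ)/2 < max 0 (1 - (i:ℝ) * φ k₀ x) :=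
          lt_max_of_lt_right (by linarith)
        have : f n x = (1/2:ℝ)^k₀ * max 0 (1 - (i:ℝ) * φ k₀ x) := by
          simp only [hfdef, hndef, Nat.unpair_pair]
          rw [if_pos hxP]
        rw [this]
        have hp : (0:ℝ) < (1/2:ℝ)^k₀ := by positivity
        calc (1/2:ℝ)^k₀ / 2 = (1/2:ℝ)^k₀ * (1/2) := by ring
          _ < (1/2:ℝ)^k₀ * max 0 (1 - (i:ℝ) * φ k₀ x) :=
            mul_lt_mul_of_pos_left h1 hp
      have := hUC n hnn₀ (n+1) (by omega) x (hOW hxO)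
      rw [hfm, sub_zero, abs_of_nonneg (fnonneg n x)] at this
      linarith
end

section
/- Let X be a perfectly normal ω-resolvable topological space and A ⊆ X. Then A is the set of points of uniform convergence of some pointwise convergent sequence of functions f_n : X → ℝ if and only if A is a G_δ set containing all isolated points of X. -/
open Filter Topology

/-- Main theorem: for a perfectly normal ω-resolvable space `X`, a set `A ⊆ X` is the
set of points of uniform convergence of some pointwise convergent sequence of real-valued
functions iff `A` is a `Gδ` set containing all isolated points of `X`. -/
theorem stmt_16 {X : Type*} [TopologicalSpace X] [NormalSpace X]
    (hpn : ∀ F : Set X, IsClosed F → ∃ φ : X → ℝ, Continuous φ ∧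
      (∀ x, φ x ∈ Set.Icc (0 : ℝ) 1) ∧ F = φ ⁻¹' {0})
    (hres : ∃ P : ℕ → Set X, (∀ n m, n ≠ m → Disjoint (P n) (P m)) ∧
      (⋃ n, P n) = Set.univ ∧ ∀ n, Dense (P n))
    (A : Set X) :
    (∃ f : ℕ → X → ℝ, ∃ g : X → ℝ,
        (∀ x, Tendsto (fun n => f n x) atTop (𝓝 (g x))) ∧
        A = {x₀ : X | ∀ ε > (0 : ℝ), ∃ U ∈ 𝓝 x₀, ∃ n₀ : ℕ, ∀ n ≥ n₀, ∀ y ∈ U,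
          |f n y - g y| < ε}) ↔
      (IsGδ A ∧ ∀ x : X, IsOpen ({x} : Set X) → x ∈ A) := by
  constructor
  · rintro ⟨f, g, hconv, rfl⟩
    constructor
    · have heq : {x₀ : X | ∀ ε > (0 : ℝ), ∃ U ∈ 𝓝 x₀, ∃ n₀ : ℕ, ∀ n ≥ n₀, ∀ y ∈ U,
          |f n y - g y| < ε}
          = ⋂ k : ℕ, ⋃₀ {U : Set X | IsOpen U ∧ ∃ n₀ : ℕ, ∀ n ≥ n₀, ∀ y ∈ U,
            |f n y - g y| < 1 / (k + 1)} := by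
        ext x
        simp only [Set.mem_iInter, Set.mem_sUnion, Set.mem_setOf_eq]
        constructor
        · intro hx k
          obtain ⟨U, hU, n₀, hn⟩ := hx (1 / (k + 1)) (by positivity)
          obtain ⟨V, hVU, hVo, hxV⟩ := mem_nhds_iff.1 hU
          exact ⟨V, ⟨hVo, n₀, fun n hn' y hy => hn n hn' y (hVU hy)⟩, hxV⟩
        · intro hx ε hε
          obtain ⟨k, hk⟩ := exists_nat_one_div_lt hε
          obtain ⟨U, ⟨hUo, n₀, hn⟩, hxU⟩ := hx k
          exact ⟨U, hUo.mem_nhds hxU, n₀, fun n hn' y hy => (hn n hn' y hy).trans hk⟩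
      rw [heq]
      exact .iInter_of_isOpen fun k => isOpen_sUnion fun U hU => hU.1
    · intro x hx ε hε
      obtain ⟨n₀, hn₀⟩ := (Metric.tendsto_atTop.1 (hconv x)) ε hε
      refine ⟨{x}, hx.mem_nhds rfl, n₀, fun n hn y hy => ?_⟩
      rcases hy with rfl
      simpa [Real.dist_eq] using hn₀ n hn
  · rintro ⟨hGδ, -⟩
    obtain ⟨G, hGo, hAG⟩ := hGδ.eq_iInter_nat
    obtain ⟨P, hPdisj, hPcov, hPdense⟩ := hres
    classical
    have e : ℕ ≃ ℕ × ℕ := (Denumerable.eqv (ℕ × ℕ)).symm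
    choose φ hφc hφ01 hφ0 using fun m => hpn (G m)ᶜ (hGo m).isClosed_compl
    have hφiff : ∀ m x, φ m x = 0 ↔ x ∉ G m := by
      intro m x
      have := Set.ext_iff.1 (hφ0 m) x
      simp only [Set.mem_compl_iff, Set.mem_preimage, Set.mem_singleton_iff] at this
      exact this.symm
    have hφnn : ∀ m x, 0 ≤ φ m x := fun m x => (hφ01 m x).1
    have hφpos : ∀ m x, x ∈ G m → 0 < φ m x := by
      intro m x hx
      rcases lt_or_eq_of_le (hφnn m x) with h | h
      · exact h
      · exact absurd ((hφiff m x).1 h.symm) (not_not.2 hx)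
    set f : ℕ → X → ℝ := fun n y =>
      if y ∈ P n then (1/2 : ℝ) ^ (e n).1 * max 0 (1 - (e n).2 * φ (e n).1 y) else 0 with hf
    refine ⟨f, 0, ?_, ?_⟩
    · intro x
      have hx : x ∈ ⋃ n, P n := hPcov ▸ Set.mem_univ x
      obtain ⟨nx, hnx⟩ := Set.mem_iUnion.1 hx
      have hev : ∀ᶠ n in atTop, (0 : ℝ) = f n x := by
        filter_upwards [eventually_gt_atTop nx] with n hn
        have hxn : x ∉ P n := fun h =>
          Set.disjoint_left.1 (hPdisj n nx (Nat.ne_of_gt hn)) h hnx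
        simp [hf, hxn]
      simpa using tendsto_const_nhds.congr' hev
    · rw [hAG]
      ext x₀
      simp only [Set.mem_iInter, Set.mem_setOf_eq, Pi.zero_apply, sub_zero]
      constructor
      · intro hx₀ ε hε
        obtain ⟨M, hM⟩ := exists_pow_lt_of_lt_one hε (by norm_num : (1:ℝ)/2 < 1)
        have hc : ∀ m, 0 < φ m x₀ := fun m => hφpos m x₀ (hx₀ m)
        choose K hK using fun m => exists_nat_gt (2 / φ m x₀)
        set Kmax := (Finset.range M).sup K with hKmax
        set B : Set ℕ := {n | (e n).1 < M ∧ (e n).2 < K (e n).1} with hB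
        have hBfin : B.Finite := by
          have hsub : B ⊆ e ⁻¹' (Set.Iio M ×ˢ Set.Iio (Kmax + 1)) := by
            intro n hn
            obtain ⟨h1, h2⟩ := hn
            refine ⟨h1, lt_of_lt_of_le h2 ?_⟩
            exact le_trans (Finset.le_sup (Finset.mem_range.2 h1)) (Nat.le_succ _)
          exact (((Set.finite_Iio M).prod (Set.finite_Iio (Kmax + 1))).preimage
            e.injective.injOn).subset hsub
        obtain ⟨b, hb⟩ := hBfin.bddAbove
        set U : Set X := ⋂ m ∈ Finset.range M, {y | φ m x₀ / 2 < φ m y} with hU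
        have hUo : IsOpen U := isOpen_biInter_finset fun m _ =>
          isOpen_Ioi.preimage (hφc m)
        have hx₀U : x₀ ∈ U := by
          simp only [hU, Set.mem_iInter, Set.mem_setOf_eq]
          intro m _
          linarith [hc m]
        refine ⟨U, hUo.mem_nhds hx₀U, b + 1, fun n hn y hy => ?_⟩
        by_cases hyP : y ∈ P n
        · simp only [hf, if_pos hyP]
          set m := (e n).1 with hm
          set k := (e n).2 with hk'
          by_cases hmM : m < M
          · have hnB : n ∉ B := fun h => by
              have := hb h; omega
            have hkK : K m ≤ k := by
              by_contra h
              exact hnB ⟨hmM, Nat.lt_of_not_le h⟩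
            have hyU : φ m x₀ / 2 < φ m y := by
              have := Set.mem_iInter.1 hy m
              simpa using (Set.mem_iInter.1 (this) (Finset.mem_range.2 hmM) : _)
            have h1 : (1 : ℝ) ≤ k * φ m y := by
              have h2 : (2 / φ m x₀ : ℝ) < K m := hK m
              have h3 : (K m : ℝ) ≤ k := Nat.cast_le.2 hkK
              have h4 : (0 : ℝ) < φ m x₀ := hc m
              have h2' : (2:ℝ) < K m * φ m x₀ := by
                rw [div_lt_iff₀ h4] at h2; linarith
              nlinarith [mul_le_mul h3 hyU.le (by positivity : (0:ℝ) ≤ φ m x₀ / 2)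
                (Nat.cast_nonneg k)]
            have : max 0 (1 - (k : ℝ) * φ m y) = 0 := max_eq_left (by linarith)
            rw [this, mul_zero, abs_zero]
            exact hε
          · have hMm : M ≤ m := le_of_not_gt hmM
            have hb1 : max 0 (1 - (k : ℝ) * φ m y) ≤ 1 := by
              apply max_le zero_le_one
              nlinarith [hφnn m y, Nat.cast_nonneg (α := ℝ) k]
            have hb2 : (0:ℝ) ≤ (1/2 : ℝ) ^ m * max 0 (1 - (k : ℝ) * φ m y) := by positivity
            rw [abs_of_nonneg hb2]
            calc (1/2 : ℝ) ^ m * max 0 (1 - (k : ℝ) * φ m y)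
                ≤ (1/2 : ℝ) ^ m * 1 := by
                  apply mul_le_mul_of_nonneg_left hb1 (by positivity)
              _ = (1/2 : ℝ) ^ m := mul_one _
              _ ≤ (1/2 : ℝ) ^ M := pow_le_pow_of_le_one (by norm_num) (by norm_num) hMm
              _ < ε := hM
        · simp only [hf, if_neg hyP, abs_zero]
          exact hε
      · intro h m
        by_contra hxm
        have hφ0x : φ m x₀ = 0 := (hφiff m x₀).2 hxm
        obtain ⟨U, hU, n₀, hn⟩ := h ((1/2 : ℝ) ^ (m + 1)) (by positivity)
        have hkex : ∃ k, n₀ ≤ e.symm (m, k) := by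
          by_contra h'
          push_neg at h'
          obtain ⟨a, b', hab, heqab⟩ := Finite.exists_ne_map_eq_of_infinite
            (fun k : ℕ => (⟨e.symm (m, k), h' k⟩ : Fin n₀))
          apply hab
          have h2 : e.symm (m, a) = e.symm (m, b') := congrArg Fin.val heqab
          have := e.symm.injective h2
          exact (Prod.mk.injEq _ _ _ _ ▸ this).2
        obtain ⟨k, hk⟩ := hkex
        set n := e.symm (m, k) with hn'
        have he1 : (e n).1 = m := by rw [hn', e.apply_symm_apply]
        have he2 : (e n).2 = k := by rw [hn', e.apply_symm_apply]
        set δ : ℝ := 1 / (2 * (k + 1)) with hδ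
        have hδpos : 0 < δ := by positivity
        set V : Set X := interior U ∩ {y | φ m y < δ} with hV
        have hVo : IsOpen V := isOpen_interior.inter (isOpen_Iio.preimage (hφc m))
        have hx₀V : x₀ ∈ V :=
          ⟨mem_interior_iff_mem_nhds.2 hU, by simpa [hφ0x] using hδpos⟩
        obtain ⟨y, hyP, hyV⟩ := (hPdense n).exists_mem_open hVo ⟨x₀, hx₀V⟩
        have hbound := hn n hk y (interior_subset hyV.1)
        have hfny : f n y = (1/2 : ℝ) ^ m * max 0 (1 - (k : ℝ) * φ m y) := by
          simp [hf, hyP, he1, he2]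
        have hφy : φ m y < δ := hyV.2
        have h5 : (k : ℝ) * φ m y < 1 / 2 := by
          have hkle : (k : ℝ) * φ m y ≤ (k : ℝ) * δ :=
            mul_le_mul_of_nonneg_left (le_of_lt hφy) (Nat.cast_nonneg k)
          have : (k : ℝ) * δ < 1 / 2 := by
            rw [hδ]
            rw [mul_one_div, div_lt_div_iff₀ (by positivity) (by norm_num)]
            push_cast
            ring_nf
            nlinarith [Nat.cast_nonneg (α := ℝ) k]
          linarith
        have h6 : (1/2 : ℝ) ^ (m + 1) < f n y := by
          rw [hfny]
          have : (1/2 : ℝ) < max 0 (1 - (k : ℝ) * φ m y) :=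
            lt_max_of_lt_right (by linarith)
          calc (1/2 : ℝ) ^ (m + 1) = (1/2 : ℝ) ^ m * (1/2) := by ring
            _ < (1/2 : ℝ) ^ m * max 0 (1 - (k : ℝ) * φ m y) := by
                apply mul_lt_mul_of_pos_left this (by positivity)
        have h7 : 0 ≤ f n y := by
          rw [hfny]; positivity
        rw [abs_of_nonneg h7] at hbound
        linarith
end

section
/- Let X be a metric space and A ⊆ X. Then A = UC(F) for some pointwise convergent sequence F = (f_n) of functions f_n : X → ℝ if and only if A is a G_δ set containing all isolated points of X. (Borsík's theorem; follows from the main theorem since every crowded metric space is ω-resolvable, and isolated points can be handled separately.) -/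
open Filter Topology

section BorsikAux

open Metric Set

variable {X : Type*} [MetricSpace X]

private lemma aux_infinite_of_not_isolated {x : X} (hx : ¬ IsOpen ({x} : Set X))
    {V : Set X} (hV : IsOpen V) (hxV : x ∈ V) : V.Infinite := by
  intro hfin
  apply hx
  have h1 : IsClosed (V \ {x}) := (hfin.subset Set.diff_subset).isClosed
  have h2 : ({x} : Set X) = V ∩ (V \ {x})ᶜ := by
    ext y
    simp only [Set.mem_singleton_iff, Set.mem_inter_iff, Set.mem_compl_iff, Set.mem_diff,
      not_and, not_not]
    constructor
    · rintro rfl; exact ⟨hxV, fun _ => rfl⟩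
    · rintro ⟨hyV, h⟩; exact h hyV
  rw [h2]; exact hV.inter h1.isOpen_compl

lemma aux_exists_net (S : Set X) {r : ℝ} (hr : 0 < r) :
    ∃ D : Set X, D ⊆ S ∧ (∀ a ∈ D, ∀ b ∈ D, a ≠ b → r ≤ dist a b) ∧
      ∀ z ∈ S, ∃ y ∈ D, dist z y < r := by
  set 𝒮 : Set (Set X) := {D | D ⊆ S ∧ ∀ a ∈ D, ∀ b ∈ D, a ≠ b → r ≤ dist a b}
  obtain ⟨m, hm⟩ := zorn_subset 𝒮 (fun c hc hchain => by
    refine ⟨⋃₀ c, ⟨?_, ?_⟩, fun s hs => Set.subset_sUnion_of_mem hs⟩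
    · exact Set.sUnion_subset fun s hs => (hc hs).1
    · rintro a ⟨s, hs, has⟩ b ⟨t, ht, hbt⟩ hab
      rcases hchain.total hs ht with h | h
      · exact (hc ht).2 a (h has) b hbt hab
      · exact (hc hs).2 a has b (h hbt) hab)
  refine ⟨m, hm.prop.1, hm.prop.2, fun z hz => ?_⟩
  by_contra h
  push_neg at h
  have hzm : z ∉ m := fun hzm => absurd hr (by simpa using h z hzm)
  have : insert z m ∈ 𝒮 := by
    constructor
    · exact Set.insert_subset hz hm.prop.1
    · rintro a (rfl | ha) b (rfl | hb) hab
      · exact absurd rfl hab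
      · exact h b hb
      · exact (dist_comm a b ▸ h a ha)
      · exact hm.prop.2 a ha b hb hab
  have := hm.2 this (Set.subset_insert z m)
  exact hzm (this (Set.mem_insert z m))

private lemma aux_exists_family (O : Set X) :
    ∃ D : ℕ → Set X,
      (∀ j, D j ⊆ O) ∧
      (∀ i j, i < j → ∀ x, x ∈ D i → x ∉ D j) ∧
      (∀ j, ∀ a ∈ D j, ∀ b ∈ D j, a ≠ b → (1/2:ℝ)^j ≤ dist a b) ∧
      (∀ j, ∀ z ∈ O, (∀ i, i < j → z ∉ D i) → ∃ y ∈ D j, dist z y < (1/2:ℝ)^j) := by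
  have hp : ∀ j : ℕ, (0:ℝ) < (1/2)^j := fun j => pow_pos (by norm_num) j
  obtain ⟨M, hM⟩ : ∃ M : Set X → ℕ → Set X, ∀ prev : Set X, ∀ j : ℕ, M prev j ⊆ O \ prev ∧
      (∀ a ∈ M prev j, ∀ b ∈ M prev j, a ≠ b → (1/2:ℝ)^j ≤ dist a b) ∧
      ∀ z ∈ O \ prev, ∃ y ∈ M prev j, dist z y < (1/2:ℝ)^j :=
    ⟨fun prev j => (aux_exists_net (O \ prev) (hp j)).choose,
     fun prev j => (aux_exists_net (O \ prev) (hp j)).choose_spec⟩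
  obtain ⟨acc, hacc0, haccs⟩ : ∃ acc : ℕ → Set X, acc 0 = ∅ ∧
      ∀ j, acc (j+1) = acc j ∪ M (acc j) j :=
    ⟨fun j => Nat.rec ∅ (fun j a => a ∪ M a j) j, rfl, fun j => rfl⟩
  set D : ℕ → Set X := fun j => M (acc j) j with hDdef
  have hsub : ∀ j, D j ⊆ O \ acc j := fun j => (hM (acc j) j).1
  have haccmono : ∀ i j, i ≤ j → acc i ⊆ acc j := by
    intro i j hij
    induction hij with
    | refl => exact subset_rfl
    | step h ih => exact ih.trans (by rw [haccs]; exact Set.subset_union_left)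
  have hDacc : ∀ i j, i < j → D i ⊆ acc j := by
    intro i j hij
    have h1 : D i ⊆ acc (i+1) := by rw [haccs]; exact Set.subset_union_right
    exact h1.trans (haccmono _ _ hij)
  have haccD : ∀ j, ∀ z, z ∈ acc j → ∃ i, i < j ∧ z ∈ D i := by
    intro j
    induction j with
    | zero => simp [hacc0]
    | succ j ih =>
      intro z hz
      rw [haccs] at hz
      rcases hz with hz | hz
      · obtain ⟨i, hi, hzi⟩ := ih z hz
        exact ⟨i, hi.trans (Nat.lt_succ_self j), hzi⟩
      · exact ⟨j, Nat.lt_succ_self j, hz⟩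
  refine ⟨D, fun j => (hsub j).trans Set.diff_subset, ?_, fun j => (hM (acc j) j).2.1, ?_⟩
  · intro i j hij x hxi hxj
    exact (hsub j hxj).2 (hDacc i j hij hxi)
  · intro j z hz hzD
    have hzacc : z ∉ acc j := fun h => by
      obtain ⟨i, hi, hzi⟩ := haccD j z h
      exact hzD i hi hzi
    exact (hM (acc j) j).2.2 z ⟨hz, hzacc⟩

private lemma aux_density {O : Set X} (hO : IsOpen O) (hiso : ∀ x ∈ O, ¬ IsOpen ({x} : Set X))
    {D : ℕ → Set X}
    (hsep : ∀ j, ∀ a ∈ D j, ∀ b ∈ D j, a ≠ b → (1/2:ℝ)^j ≤ dist a b)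
    (hnet : ∀ j, ∀ z ∈ O, (∀ i, i < j → z ∉ D i) → ∃ y ∈ D j, dist z y < (1/2:ℝ)^j)
    {x₀ : X} (hx₀ : x₀ ∈ O) {r : ℝ} (hr : 0 < r) (n₀ : ℕ) :
    ∃ j, n₀ ≤ j ∧ ∃ y ∈ D j, dist x₀ y < r := by
  obtain ⟨N, hN⟩ : ∃ N : ℕ, (1/2:ℝ)^N < r/2 :=
    exists_pow_lt_of_lt_one (by linarith) (by norm_num)
  set j := max (max n₀ 1) N with hj
  have hj1 : 1 ≤ j := le_trans (le_max_right n₀ 1) (le_max_left _ _)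
  have hjn₀ : n₀ ≤ j := le_trans (le_max_left n₀ 1) (le_max_left _ _)
  have hjN : (1/2:ℝ)^j ≤ (1/2)^N :=
    pow_le_pow_of_le_one (by norm_num) (by norm_num) (le_max_right _ _)
  have hpj : (0:ℝ) < (1/2)^j := pow_pos (by norm_num) j
  set B := Metric.ball x₀ ((1/2:ℝ)^j) ∩ O with hB
  have hBopen : IsOpen B := Metric.isOpen_ball.inter hO
  have hx₀B : x₀ ∈ B := ⟨Metric.mem_ball_self hpj, hx₀⟩
  have hBinf : B.Infinite := aux_infinite_of_not_isolated (hiso x₀ hx₀) hBopen hx₀B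
  set T := ⋃ i ∈ Finset.range j, (D i ∩ Metric.ball x₀ ((1/2:ℝ)^j)) with hT
  have hTfin : T.Finite := by
    apply Set.Finite.biUnion (Finset.range j).finite_toSet
    intro i hi
    simp only [Finset.coe_sort_coe, Finset.mem_coe, Finset.mem_range] at hi
    apply Set.Subsingleton.finite
    intro a ha b hb
    by_contra hab
    have h1 : (1/2:ℝ)^i ≤ dist a b := hsep i a ha.1 b hb.1 hab
    have h2 : dist a b < (1/2:ℝ)^j + (1/2:ℝ)^j := by
      calc dist a b ≤ dist a x₀ + dist x₀ b := dist_triangle _ _ _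
        _ < (1/2:ℝ)^j + (1/2:ℝ)^j := by
            have h4 : dist a x₀ < (1/2:ℝ)^j := ha.2
            have h5 : dist b x₀ < (1/2:ℝ)^j := hb.2
            rw [dist_comm x₀ b]
            exact add_lt_add h4 h5
    have h6 : (1/2:ℝ)^j ≤ (1/2:ℝ)^(i+1) :=
      pow_le_pow_of_le_one (by norm_num) (by norm_num) (by omega)
    have h7 : (1/2:ℝ)^(i+1) = (1/2)*(1/2:ℝ)^i := by rw [pow_succ]; ring
    linarith
  obtain ⟨z, hz⟩ : (B \ T).Nonempty := (hBinf.diff hTfin).nonempty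
  have hzO : z ∈ O := hz.1.2
  have hzD : ∀ i, i < j → z ∉ D i := by
    intro i hi hzi
    exact hz.2 (Set.mem_biUnion (Finset.mem_range.mpr hi) ⟨hzi, hz.1.1⟩)
  obtain ⟨y, hyD, hyz⟩ := hnet j z hzO hzD
  refine ⟨j, hjn₀, y, hyD, ?_⟩
  calc dist x₀ y ≤ dist x₀ z + dist z y := dist_triangle _ _ _
    _ < (1/2:ℝ)^j + (1/2:ℝ)^j := add_lt_add (by simpa [Metric.mem_ball, dist_comm] using hz.1.1) hyz
    _ ≤ (1/2:ℝ)^N + (1/2:ℝ)^N := add_le_add hjN hjN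
    _ < r := by linarith

private lemma borsik_bwd (A : Set X)
    (hGδ : IsGδ A) (hiso : ∀ x : X, IsOpen ({x} : Set X) → x ∈ A) :
    ∃ f : ℕ → X → ℝ, (∀ x, ∃ y : ℝ, Tendsto (fun n => f n x) atTop (𝓝 y)) ∧
        A = {x₀ : X | ∀ ε > (0 : ℝ), ∃ U ∈ 𝓝 x₀, ∃ n₀ : ℕ, ∀ n ≥ n₀, ∀ m ≥ n₀, ∀ x ∈ U,
          |f n x - f m x| < ε} := by
  classical
  obtain ⟨U, hUopen, hAU⟩ := isGδ_iff_eq_iInter_nat.mp hGδ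
  have hDex : ∀ k : ℕ, ∃ D : ℕ → Set X,
      (∀ j, D j ⊆ interior (U k)ᶜ) ∧
      (∀ i j, i < j → ∀ x, x ∈ D i → x ∉ D j) ∧
      (∀ j, ∀ a ∈ D j, ∀ b ∈ D j, a ≠ b → (1/2:ℝ)^j ≤ dist a b) ∧
      (∀ j, ∀ z ∈ interior (U k)ᶜ, (∀ i, i < j → z ∉ D i) → ∃ y ∈ D j, dist z y < (1/2:ℝ)^j) :=
    fun k => aux_exists_family _
  choose D hD1 hD2 hD3 hD4 using hDex
  set c : ℕ → ℕ → X → ℝ := fun k n x =>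
    (if 0 < Metric.infDist x (U k)ᶜ ∧ (n:ℝ) * Metric.infDist x (U k)ᶜ ≤ 1 then (1:ℝ) else 0)
    + (if ∃ j, n ≤ j ∧ x ∈ D k j then (1:ℝ) else 0) with hcdef
  have hc0 : ∀ k n x, 0 ≤ c k n x := by
    intro k n x
    simp only [hcdef]
    split_ifs <;> norm_num
  have hc2 : ∀ k n x, c k n x ≤ 2 := by
    intro k n x
    simp only [hcdef]
    split_ifs <;> norm_num
  have hcanti : ∀ k x n m, n ≤ m → c k m x ≤ c k n x := by
    intro k x n m hnm
    simp only [hcdef]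
    have hd : (0:ℝ) ≤ Metric.infDist x (U k)ᶜ := Metric.infDist_nonneg
    apply add_le_add
    · split_ifs with h1 h2
      · exact le_rfl
      · exfalso
        exact h2 ⟨h1.1, le_trans (mul_le_mul_of_nonneg_right (show (n:ℝ) ≤ (m:ℝ) by exact_mod_cast hnm) hd) h1.2⟩
      · norm_num
      · exact le_rfl
    · split_ifs with h1 h2
      · exact le_rfl
      · exfalso
        obtain ⟨j, hj1, hj2⟩ := h1
        exact h2 ⟨j, hnm.trans hj1, hj2⟩
      · norm_num
      · exact le_rfl
  set f : ℕ → X → ℝ := fun n x => ∑' k, (1/2:ℝ)^k * c k n x with hfdef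
  have hpow0 : ∀ k : ℕ, (0:ℝ) ≤ (1/2)^k := fun k => pow_nonneg (by norm_num) k
  have hsummable : ∀ n x, Summable (fun k => (1/2:ℝ)^k * c k n x) := by
    intro n x
    apply Summable.of_nonneg_of_le (fun k => mul_nonneg (hpow0 k) (hc0 k n x))
      (fun k => mul_le_mul_of_nonneg_left (hc2 k n x) (hpow0 k))
    exact summable_geometric_two.mul_right 2
  have hfnonneg : ∀ n x, 0 ≤ f n x := fun n x =>
    tsum_nonneg fun k => mul_nonneg (hpow0 k) (hc0 k n x)
  have hfanti : ∀ x, ∀ n m : ℕ, n ≤ m → f m x ≤ f n x := by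
    intro x n m hnm
    exact Summable.tsum_le_tsum (fun k => mul_le_mul_of_nonneg_left (hcanti k x n m hnm) (hpow0 k))
      (hsummable m x) (hsummable n x)
  have hconv : ∀ x, ∃ y : ℝ, Tendsto (fun n => f n x) atTop (𝓝 y) := by
    intro x
    refine ⟨_, tendsto_atTop_ciInf (fun n m hnm => hfanti x n m hnm) ?_⟩
    exact ⟨0, by rintro v ⟨n, rfl⟩; exact hfnonneg n x⟩
  have hlow : ∀ (k n m : ℕ) (x : X), n ≤ m →
      (1/2:ℝ)^k * (c k n x - c k m x) ≤ f n x - f m x := by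
    intro k n m x hnm
    have hs : Summable (fun k' => (1/2:ℝ)^k' * c k' n x - (1/2:ℝ)^k' * c k' m x) :=
      (hsummable n x).sub (hsummable m x)
    have heq : f n x - f m x = ∑' k', ((1/2:ℝ)^k' * c k' n x - (1/2:ℝ)^k' * c k' m x) :=
      (Summable.tsum_sub (hsummable n x) (hsummable m x)).symm
    rw [heq]
    have h1 : (1/2:ℝ)^k * (c k n x - c k m x)
        = (1/2:ℝ)^k * c k n x - (1/2:ℝ)^k * c k m x := by ring
    rw [h1]
    exact Summable.le_tsum hs k fun j _ =>
      sub_nonneg.mpr (mul_le_mul_of_nonneg_left (hcanti j x n m hnm) (hpow0 j))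
  -- silence lemma at points of A
  have hsilence : ∀ (k : ℕ) (a : X), a ∈ U k → ∃ δ : ℝ, 0 < δ ∧ ∃ N : ℕ,
      ∀ x ∈ Metric.ball a δ, ∀ n ≥ N, c k n x = 0 := by
    intro k a ha
    rcases Set.eq_empty_or_nonempty ((U k)ᶜ) with hFe | hFne
    · refine ⟨1, one_pos, 0, fun x _ n _ => ?_⟩
      simp only [hcdef]
      rw [if_neg, if_neg, add_zero]
      · rintro ⟨j, _, hxj⟩
        have := hD1 k j hxj
        rw [hFe] at this
        simp at this
      · rintro ⟨hpos, _⟩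
        rw [hFe] at hpos
        simp [Metric.infDist_empty] at hpos
    · have hFc : IsClosed ((U k)ᶜ) := (hUopen k).isClosed_compl
      have hd : 0 < Metric.infDist a ((U k)ᶜ) :=
        (hFc.notMem_iff_infDist_pos hFne).mp (by simpa using ha)
      obtain ⟨N, hN⟩ := exists_nat_gt (2 / Metric.infDist a ((U k)ᶜ))
      refine ⟨Metric.infDist a ((U k)ᶜ) / 2, by positivity, N, fun x hx n hn => ?_⟩
      set d := Metric.infDist a ((U k)ᶜ) with hddef
      have hxd : d / 2 ≤ Metric.infDist x ((U k)ᶜ) := by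
        have h1 : d ≤ Metric.infDist x ((U k)ᶜ) + dist a x :=
          Metric.infDist_le_infDist_add_dist
        have h2 : dist a x < d / 2 := by rwa [Metric.mem_ball, dist_comm] at hx
        linarith
      simp only [hcdef]
      rw [if_neg, if_neg, add_zero]
      · rintro ⟨j, _, hxj⟩
        have hmem : x ∈ (U k)ᶜ := interior_subset (hD1 k j hxj)
        have : Metric.infDist x ((U k)ᶜ) = 0 := Metric.infDist_zero_of_mem hmem
        rw [this] at hxd
        linarith
      · rintro ⟨_, hle⟩
        have hNn : (N:ℝ) ≤ (n:ℝ) := by exact_mod_cast hn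
        have h2d : 2 / d < (N:ℝ) := hN
        have : (2:ℝ) < (n:ℝ) * d := by
          rw [div_lt_iff₀ (by positivity)] at h2d
          nlinarith
        nlinarith [hxd, Metric.infDist_nonneg (x := x) (s := ((U k)ᶜ))]
  refine ⟨f, hconv, ?_⟩
  ext x₀
  simp only [Set.mem_setOf_eq]
  constructor
  · intro hx₀ ε hε
    have hx₀U : ∀ k, x₀ ∈ U k := by rw [hAU] at hx₀; exact Set.mem_iInter.mp hx₀
    obtain ⟨K, hK⟩ : ∃ K : ℕ, (1/2:ℝ)^K < ε/4 :=
      exists_pow_lt_of_lt_one (by linarith) (by norm_num)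
    choose δ hδpos N hsil using fun k => hsilence k x₀ (hx₀U k)
    set V := ⋂ k ∈ Finset.range K, Metric.ball x₀ (δ k) with hVdef
    have hVnhds : V ∈ 𝓝 x₀ := by
      rw [hVdef, Filter.biInter_finset_mem]
      exact fun k _ => Metric.ball_mem_nhds x₀ (hδpos k)
    set n₀ := (Finset.range K).sup N with hn₀
    refine ⟨V, hVnhds, n₀, ?_⟩
    have hbound : ∀ n ≥ n₀, ∀ x ∈ V, f n x ≤ 4 * (1/2:ℝ)^K := by
      intro n hn x hx
      have hzero : ∀ k, k < K → (1/2:ℝ)^k * c k n x = 0 := by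
        intro k hk
        have hxball : x ∈ Metric.ball x₀ (δ k) :=
          Set.mem_iInter₂.mp hx k (Finset.mem_range.mpr hk)
        rw [hsil k x hxball n (le_trans (Finset.le_sup (Finset.mem_range.mpr hk)) hn), mul_zero]
      have hsplit := Summable.sum_add_tsum_nat_add K (hsummable n x)
      have h1 : ∑ i ∈ Finset.range K, (1/2:ℝ)^i * c i n x = 0 :=
        Finset.sum_eq_zero (fun i hi => hzero i (Finset.mem_range.mp hi))
      have hshift : Summable (fun i => (1/2:ℝ)^(i+K) * c (i+K) n x) :=
        (summable_nat_add_iff K).mpr (hsummable n x)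
      have hrhs : Summable (fun i : ℕ => (1/2:ℝ)^i * ((1/2:ℝ)^K * 2)) :=
        summable_geometric_two.mul_right _
      have h2 : ∑' i, (1/2:ℝ)^(i+K) * c (i+K) n x ≤ ∑' i : ℕ, (1/2:ℝ)^i * ((1/2:ℝ)^K * 2) := by
        apply Summable.tsum_le_tsum _ hshift hrhs
        intro i
        rw [pow_add, mul_assoc]
        exact mul_le_mul_of_nonneg_left
          (mul_le_mul_of_nonneg_left (hc2 _ n x) (hpow0 K)) (hpow0 i)
      have h3 : ∑' i : ℕ, (1/2:ℝ)^i * ((1/2:ℝ)^K * 2) = 4 * (1/2:ℝ)^K := by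
        rw [tsum_mul_right, tsum_geometric_two]; ring
      calc f n x = ∑ i ∈ Finset.range K, (1/2:ℝ)^i * c i n x
            + ∑' i, (1/2:ℝ)^(i+K) * c (i+K) n x := hsplit.symm
        _ = ∑' i, (1/2:ℝ)^(i+K) * c (i+K) n x := by rw [h1, zero_add]
        _ ≤ ∑' i : ℕ, (1/2:ℝ)^i * ((1/2:ℝ)^K * 2) := h2
        _ = 4 * (1/2:ℝ)^K := h3
    intro n hn m hm x hx
    have h1 := hbound n hn x hx
    have h2 := hbound m hm x hx
    have h3 := hfnonneg n x
    have h4 := hfnonneg m x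
    rw [abs_lt]
    constructor <;> nlinarith
  · intro hUC
    by_contra hx₀A
    rw [hAU, Set.mem_iInter] at hx₀A
    push_neg at hx₀A
    obtain ⟨k, hk⟩ := hx₀A
    have hk' : x₀ ∈ (U k)ᶜ := hk
    obtain ⟨V, hV, n₀, hprop⟩ := hUC ((1/2:ℝ)^k) (pow_pos (by norm_num) k)
    obtain ⟨r, hr, hball⟩ := Metric.mem_nhds_iff.mp hV
    have hnoiso : ∀ x ∈ interior (U k)ᶜ, ¬ IsOpen ({x} : Set X) := by
      intro x hx hop
      have hm : x ∈ A := hiso x hop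
      rw [hAU] at hm
      exact (interior_subset hx) (Set.mem_iInter.mp hm k)
    by_cases hxO : x₀ ∈ interior (U k)ᶜ
    · obtain ⟨j, hj, y, hyD, hyfar⟩ :=
        aux_density isOpen_interior hnoiso (hD3 k) (hD4 k) hxO hr n₀
      have hyV : y ∈ V := hball (by rwa [Metric.mem_ball, dist_comm])
      have hyF : y ∈ (U k)ᶜ := interior_subset (hD1 k j hyD)
      have hdy : Metric.infDist y ((U k)ᶜ) = 0 := Metric.infDist_zero_of_mem hyF
      have hcn : c k n₀ y = 1 := by
        simp only [hcdef]
        rw [if_neg, if_pos ⟨j, hj, hyD⟩, zero_add]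
        rintro ⟨hpos, -⟩
        rw [hdy] at hpos
        exact lt_irrefl 0 hpos
      have hcm : c k (j+1) y = 0 := by
        simp only [hcdef]
        rw [if_neg, if_neg, add_zero]
        · rintro ⟨j', hj', hyD'⟩
          exact hD2 k j j' (by omega) y hyD hyD'
        · rintro ⟨hpos, -⟩
          rw [hdy] at hpos
          exact lt_irrefl 0 hpos
      have hge := hlow k n₀ (j+1) y (by omega)
      rw [hcn, hcm] at hge
      have habs := hprop n₀ le_rfl (j+1) (by omega) y hyV
      have h5 : (1/2:ℝ)^k ≤ |f n₀ y - f (j+1) y| :=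
        le_trans (by simpa using hge) (le_abs_self _)
      linarith
    · set n := max n₀ 1 with hndef
      have hn1 : (1:ℝ) ≤ (n:ℝ) := by exact_mod_cast le_max_right n₀ 1
      set ρ := min r (1/(2*(n:ℝ))) with hρdef
      have hρpos : 0 < ρ := lt_min hr (by positivity)
      obtain ⟨y, hyball, hyU⟩ : ∃ y ∈ Metric.ball x₀ ρ, y ∈ U k := by
        by_contra h
        push_neg at h
        exact hxO (interior_maximal (fun z hz => h z hz) Metric.isOpen_ball
          (Metric.mem_ball_self hρpos))
      have hFne : ((U k)ᶜ).Nonempty := ⟨x₀, hk'⟩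
      have hFc : IsClosed ((U k)ᶜ) := (hUopen k).isClosed_compl
      have hdpos : 0 < Metric.infDist y ((U k)ᶜ) :=
        (hFc.notMem_iff_infDist_pos hFne).mp (by simpa using hyU)
      have hdle : Metric.infDist y ((U k)ᶜ) ≤ dist y x₀ := Metric.infDist_le_dist_of_mem hk'
      have hdsmall : Metric.infDist y ((U k)ᶜ) < 1/(2*(n:ℝ)) :=
        lt_of_lt_of_le (lt_of_le_of_lt hdle (Metric.mem_ball.mp hyball)) (min_le_right _ _)
      obtain ⟨m₁, hm₁⟩ := exists_nat_gt (1 / Metric.infDist y ((U k)ᶜ))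
      set m := max m₁ n with hmdef
      have hyV : y ∈ V := hball (lt_of_lt_of_le (Metric.mem_ball.mp hyball) (min_le_left _ _))
      have hyNF : y ∉ interior (U k)ᶜ := fun h => (interior_subset h) (by simpa using hyU)
      have hβ : ∀ n' : ℕ, (if ∃ j, n' ≤ j ∧ y ∈ D k j then (1:ℝ) else 0) = 0 := by
        intro n'
        rw [if_neg]
        rintro ⟨j, -, hyD⟩
        exact hyNF (hD1 k j hyD)
      have hcn : c k n y = 1 := by
        simp only [hcdef]
        rw [hβ, if_pos, add_zero]
        refine ⟨hdpos, ?_⟩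
        have := hdsmall
        rw [lt_div_iff₀ (by positivity)] at this
        nlinarith [Metric.infDist_nonneg (x := y) (s := ((U k)ᶜ))]
      have hcm : c k m y = 0 := by
        simp only [hcdef]
        rw [hβ, if_neg, add_zero]
        rintro ⟨-, hle⟩
        have hm₁m : (m₁:ℝ) ≤ (m:ℝ) := by exact_mod_cast le_max_left m₁ n
        rw [div_lt_iff₀ hdpos] at hm₁
        nlinarith
      have hge := hlow k n m y (by exact_mod_cast le_max_right m₁ n)
      rw [hcn, hcm] at hge
      have habs := hprop n (le_max_left n₀ 1) m
        (le_trans (le_max_left n₀ 1) (le_max_right m₁ n)) y hyV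
      rw [sub_zero, mul_one] at hge
      have h5 : (1/2:ℝ)^k ≤ |f n y - f m y| := le_trans hge (le_abs_self _)
      linarith

private lemma borsik_fwd (A : Set X)
    (f : ℕ → X → ℝ) (hconv : ∀ x, ∃ y : ℝ, Tendsto (fun n => f n x) atTop (𝓝 y))
    (hA : A = {x₀ : X | ∀ ε > (0 : ℝ), ∃ U ∈ 𝓝 x₀, ∃ n₀ : ℕ, ∀ n ≥ n₀, ∀ m ≥ n₀, ∀ x ∈ U,
          |f n x - f m x| < ε}) :
    (IsGδ A ∧ ∀ x : X, IsOpen ({x} : Set X) → x ∈ A) := by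
  constructor
  · set G : ℕ → Set X := fun k => {x₀ | ∃ V : Set X, IsOpen V ∧ x₀ ∈ V ∧ ∃ n₀ : ℕ,
      ∀ n ≥ n₀, ∀ m ≥ n₀, ∀ x ∈ V, |f n x - f m x| < 1/(k+1)} with hG
    have hGopen : ∀ k, IsOpen (G k) := by
      intro k
      rw [isOpen_iff_mem_nhds]
      rintro x ⟨V, hVopen, hxV, n₀, hV⟩
      filter_upwards [hVopen.mem_nhds hxV] with y hy
      exact ⟨V, hVopen, hy, n₀, hV⟩
    have hAG : A = ⋂ k, G k := by
      rw [hA]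
      ext x₀
      simp only [Set.mem_iInter, Set.mem_setOf_eq]
      constructor
      · intro h k
        obtain ⟨U, hU, n₀, hprop⟩ := h (1/(k+1)) (by positivity)
        obtain ⟨V, hVU, hVopen, hxV⟩ := _root_.mem_nhds_iff.mp hU
        exact ⟨V, hVopen, hxV, n₀, fun n hn m hm x hx => hprop n hn m hm x (hVU hx)⟩
      · intro h ε hε
        obtain ⟨k, hk⟩ := exists_nat_one_div_lt hε
        obtain ⟨V, hVopen, hxV, n₀, hprop⟩ := h k
        exact ⟨V, hVopen.mem_nhds hxV, n₀,
          fun n hn m hm x hx => (hprop n hn m hm x hx).trans hk⟩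
    rw [hAG]
    exact IsGδ.iInter fun k => (hGopen k).isGδ
  · intro x hx
    rw [hA]
    intro ε hε
    obtain ⟨y, hy⟩ := hconv x
    have hcs : CauchySeq fun n => f n x := hy.cauchySeq
    obtain ⟨N, hN⟩ := Metric.cauchySeq_iff.mp hcs ε hε
    refine ⟨{x}, hx.mem_nhds rfl, N, fun n hn m hm x' hx' => ?_⟩
    rw [Set.mem_singleton_iff] at hx'
    subst hx'
    rw [← Real.dist_eq]
    exact hN n hn m hm


end BorsikAux

/-- Borsík's theorem: for a metric space `X`, a set `A ⊆ X` equals `UC(F)` for some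
pointwise convergent sequence `F` of real-valued functions iff `A` is a `Gδ` set
containing all isolated points of `X`. -/
theorem stmt_17 {X : Type*} [MetricSpace X] (A : Set X) :
    (∃ f : ℕ → X → ℝ, (∀ x, ∃ y : ℝ, Tendsto (fun n => f n x) atTop (𝓝 y)) ∧
        A = {x₀ : X | ∀ ε > (0 : ℝ), ∃ U ∈ 𝓝 x₀, ∃ n₀ : ℕ, ∀ n ≥ n₀, ∀ m ≥ n₀, ∀ x ∈ U,
          |f n x - f m x| < ε}) ↔
      (IsGδ A ∧ ∀ x : X, IsOpen ({x} : Set X) → x ∈ A) := by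
  constructor
  · rintro ⟨f, hconv, hA⟩
    exact borsik_fwd A f hconv hA
  · rintro ⟨h1, h2⟩
    exact borsik_bwd A h1 h2
end
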